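/- Let A be an abelian group and let (H_w)_{w ∈ W} be a family of subgroups indexed by a prefix-free set W of binary strings, obtained as follows: there are injective endomorphisms φ₀, φ₁ of A with A = φ₀(A) ⊕ φ₁(A) possible to iterate, i.e., φ₀(A) ∩ φ₁(A) = 0, and H_w = φ_w(H) for a fixed subgroup H ≤ A, where φ_w is the composition of φ's along w. Then the sum Σ_{w ∈ W} H_w is direct. -/

import Mathlib

/-!
It suffices to show that the ranges `φ_w(A)`, `w ∈ W`, are independent, by induction on `w`.
A prefix-free set containing `[]` is `{[]}`. For `w = i :: w'`, the other words beginning with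
`i` contribute the `φ i`-images of the ranges indexed by the prefix-free set
`{v | i :: v ∈ W}`, and those beginning with `!i` lie in `φ (!i)(A)`. As `φ i` is injective and
`φ i(A) ∩ φ (!i)(A) = 0`, the modular law in the lattice of subgroups reduces the claim to `w'`.
-/

/-- Composition `φ_{i₁} ∘ ⋯ ∘ φ_{i_ℓ}` of a pair of additive endomorphisms along a
binary string. -/
def addCompWord {A : Type*} [AddCommGroup A] (φ : Bool → (A →+ A)) : List Bool → (A →+ A)
  | [] => AddMonoidHom.id A
  | i :: w => (φ i).comp (addCompWord φ w)

def IsPrefixFree {α : Type*} (W : Set (List α)) : Prop :=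
  ∀ l ∈ W, ∀ l' ∈ W, l <+: l' → l = l'

lemma IsPrefixFree.preimage_cons {α : Type*} {W : Set (List α)} (hW : IsPrefixFree W) (a : α) :
    IsPrefixFree (List.cons a ⁻¹' W) := fun _ hl _ hl' hpre =>
  List.cons_injective (hW _ hl _ hl' (List.cons_prefix_cons.mpr ⟨rfl, hpre⟩))

lemma IsPrefixFree.eq_nil {α : Type*} {W : Set (List α)} (hW : IsPrefixFree W) (hnil : [] ∈ W)
    {l : List α} (hl : l ∈ W) : l = [] :=
  (hW _ hnil _ hl List.nil_prefix).symm

lemma AddSubgroup.disjoint_map_sup_of_injective {A B : Type*} [AddGroup A] [AddCommGroup B]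
    {f : A →+ B} (hf : Function.Injective f) {X Y : AddSubgroup A} {Q : AddSubgroup B}
    (hXY : Disjoint X Y) (hQ : Disjoint f.range Q) :
    Disjoint (X.map f) (Y.map f ⊔ Q) :=
  (AddSubgroup.disjoint_map hf hXY).disjoint_sup_right_of_disjoint_sup_left <|
    hQ.mono_left (sup_le (AddSubgroup.map_le_range f X) (AddSubgroup.map_le_range f Y))

section addCompWord

variable {A : Type*} [AddCommGroup A] (φ : Bool → (A →+ A))

lemma range_addCompWord_cons (i : Bool) (w : List Bool) :
    (addCompWord φ (i :: w)).range = (addCompWord φ w).range.map (φ i) :=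
  AddMonoidHom.range_comp _ _

lemma range_addCompWord_cons_le (i : Bool) (w : List Bool) :
    (addCompWord φ (i :: w)).range ≤ (φ i).range :=
  (range_addCompWord_cons φ i w).trans_le (AddSubgroup.map_le_range _ _)

variable {φ}

lemma iSup_range_addCompWord_ne_cons_le {W : Set (List Bool)} (hW : IsPrefixFree W)
    {i : Bool} {w : List Bool} (hw : i :: w ∈ W) :
    ⨆ v ∈ W, ⨆ (_ : v ≠ i :: w), (addCompWord φ v).range ≤
      (⨆ v ∈ List.cons i ⁻¹' W, ⨆ (_ : v ≠ w), (addCompWord φ v).range).map (φ i) ⊔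
        (φ (!i)).range := by
  refine iSup₂_le fun v hv => iSup_le fun hne => ?_
  match v, hv, hne with
  | [], hv, _ => exact absurd (hW.eq_nil hv hw) (List.cons_ne_nil _ _)
  | j :: v, hv, hne =>
    by_cases hj : j = i
    · subst hj
      refine le_sup_of_le_left ?_
      rw [range_addCompWord_cons]
      exact AddSubgroup.map_mono (le_iSup₂_of_le v hv (le_iSup_of_le (by simpa using hne) le_rfl))
    · rw [Bool.eq_not.mpr hj]
      exact le_sup_of_le_right (range_addCompWord_cons_le φ _ v)

variable (hinj : ∀ i, Function.Injective (φ i))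
  (hdisj : ∀ i, Disjoint (φ i).range (φ (!i)).range)
include hinj hdisj

theorem disjoint_range_addCompWord_iSup (w : List Bool) {W : Set (List Bool)}
    (hW : IsPrefixFree W) (hw : w ∈ W) :
    Disjoint (addCompWord φ w).range (⨆ v ∈ W, ⨆ (_ : v ≠ w), (addCompWord φ v).range) := by
  induction w generalizing W with
  | nil =>
    exact disjoint_bot_right.mono_right
      (iSup₂_le fun v hv => iSup_le fun hne => absurd (hW.eq_nil hw hv) hne)
  | cons i w ih =>
    rw [range_addCompWord_cons]
    exact (AddSubgroup.disjoint_map_sup_of_injective (hinj i)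
      (ih (hW.preimage_cons i) hw) (hdisj i)).mono_right
      (iSup_range_addCompWord_ne_cons_le hW hw)

theorem iSupIndep_range_addCompWord {W : Set (List Bool)} (hW : IsPrefixFree W) :
    iSupIndep (fun w : W => (addCompWord φ (w : List Bool)).range) := fun w =>
  (disjoint_range_addCompWord_iSup hinj hdisj w.1 hW w.2).mono_right <|
    iSup₂_le fun v hne => le_iSup₂_of_le v.1 v.2 <| by
      exact le_iSup_of_le (Subtype.coe_ne_coe.mpr hne) le_rfl

end addCompWord

/-- Prefix-free addressing through a pair of injective endomorphisms with independent
images yields an internal direct sum: if `φ₀, φ₁` are injective endomorphisms of an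
abelian group `A` with `φ₀(A) ∩ φ₁(A) = 0`, `W` is a prefix-free set of binary strings,
and `H_w = φ_w(H)` for a fixed subgroup `H ≤ A`, then the sum `Σ_{w ∈ W} H_w` is direct. -/
theorem prefixFree_sum_independent {A : Type*} [AddCommGroup A] (φ : Bool → (A →+ A))
    (hinj : ∀ i, Function.Injective (φ i))
    (htriv : ∀ x y : A, φ false x = φ true y → φ false x = 0)
    (H : AddSubgroup A) (W : Set (List Bool))
    (hW : ∀ l ∈ W, ∀ l' ∈ W, l <+: l' → l = l') :
    iSupIndep (fun w : W => AddSubgroup.map (addCompWord φ (w : List Bool)) H) := by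
  have hdisj : Disjoint (φ false).range (φ true).range := by
    rw [AddSubgroup.disjoint_def]
    rintro _ ⟨x, rfl⟩ ⟨y, hy⟩
    exact htriv x y hy.symm
  have hdisj' : ∀ i, Disjoint (φ i).range (φ (!i)).range := by
    rintro (_ | _)
    exacts [hdisj, hdisj.symm]
  exact (iSupIndep_range_addCompWord hinj hdisj' hW).mono fun w =>
    AddSubgroup.map_le_range _ H
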